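/- arXiv:1204.2090 — 3 statements merged into one kernel-verified Lean document; each statement's English description precedes it below -/
import Mathlib

section
/- If a differentiable function C : (0,1)² → (0,1) is self-chaining (C(u^k,v^k) = C(u,v)^k for all k > 0), then it satisfies the PDE ∂C/∂u(u,v)·u·log u + ∂C/∂v(u,v)·v·log v = C(u,v)·log C(u,v) for all u, v ∈ (0,1). -/
/-!
Self-chaining lets one move the exponent from one argument to the other:
`C(u^k, v) = C(u, v^{1/k})^k`. Both sides now depend on `k` through a single argument of `C`
at a time, so only the partial derivatives are needed to differentiate this identity at `k = 1`,
and the two derivatives are `C_u·u·log u` and `C·log C − C_v·v·log v`.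
-/

open Filter Topology Real

theorem rpow_mem_Ioo_zero_one {x : ℝ} (hx : x ∈ Set.Ioo (0 : ℝ) 1) {k : ℝ} (hk : 0 < k) :
    x ^ k ∈ Set.Ioo (0 : ℝ) 1 :=
  ⟨rpow_pos_of_pos hx.1 k, rpow_lt_one hx.1.le hx.2 hk⟩

theorem hasDerivAt_comp_const_rpow_at_one {f : ℝ → ℝ} {f' a : ℝ} (hf : HasDerivAt f f' a)
    (ha : 0 < a) : HasDerivAt (fun k : ℝ => f (a ^ k)) (f' * (a * Real.log a)) 1 := by
  have hpow : HasDerivAt (fun k : ℝ => a ^ k) (a * Real.log a) 1 := by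
    simpa using (hasStrictDerivAt_const_rpow ha 1).hasDerivAt
  exact (by simpa using hf : HasDerivAt f f' (a ^ (1 : ℝ))).comp 1 hpow

theorem hasDerivAt_rpow_comp_inv_self_at_one {g : ℝ → ℝ} {g' : ℝ} (hg : HasDerivAt g g' 1)
    (hg1 : 0 < g 1) : HasDerivAt (fun k : ℝ => g k⁻¹ ^ k) (g 1 * Real.log (g 1) - g') 1 := by
  have hinv : HasDerivAt (fun k : ℝ => g k⁻¹) (g' * -1) 1 :=
    (by simpa using hg : HasDerivAt g g' (1 : ℝ)⁻¹).comp 1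
      (by simpa using hasDerivAt_inv (one_ne_zero' ℝ))
  refine (hinv.rpow (hasDerivAt_id' 1) (by simpa using hg1)).congr_deriv ?_
  simp only [inv_one, sub_self, rpow_zero, rpow_one]
  ring

theorem selfChaining_shift_exponent (C : ℝ → ℝ → ℝ)
    (hsc : ∀ u v, u ∈ Set.Ioo (0 : ℝ) 1 → v ∈ Set.Ioo (0 : ℝ) 1 →
      ∀ k : ℝ, 0 < k → C (u ^ k) (v ^ k) = C u v ^ k)
    {u v : ℝ} (hu : u ∈ Set.Ioo (0 : ℝ) 1) (hv : v ∈ Set.Ioo (0 : ℝ) 1) {k : ℝ} (hk : 0 < k) :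
    C (u ^ k) v = C u (v ^ k⁻¹) ^ k := by
  have hvk : (v ^ k⁻¹) ^ k = v := by
    rw [← rpow_mul hv.1.le, inv_mul_cancel₀ hk.ne', rpow_one]
  simpa only [hvk] using hsc u (v ^ k⁻¹) hu (rpow_mem_Ioo_zero_one hv (inv_pos.2 hk)) k hk

/-- A differentiable self-chaining function `C : (0,1)² → (0,1)` satisfies the
PDE `C_u(u,v)·u·log u + C_v(u,v)·v·log v = C(u,v)·log C(u,v)`. -/
theorem selfChaining_PDE
    (C : ℝ → ℝ → ℝ)
    (hmap : ∀ u v, u ∈ Set.Ioo (0 : ℝ) 1 → v ∈ Set.Ioo (0 : ℝ) 1 →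
      C u v ∈ Set.Ioo (0 : ℝ) 1)
    (hdiff1 : ∀ u v, u ∈ Set.Ioo (0 : ℝ) 1 → v ∈ Set.Ioo (0 : ℝ) 1 →
      DifferentiableAt ℝ (fun x => C x v) u)
    (hdiff2 : ∀ u v, u ∈ Set.Ioo (0 : ℝ) 1 → v ∈ Set.Ioo (0 : ℝ) 1 →
      DifferentiableAt ℝ (fun y => C u y) v)
    (hsc : ∀ u v, u ∈ Set.Ioo (0 : ℝ) 1 → v ∈ Set.Ioo (0 : ℝ) 1 →
      ∀ k : ℝ, 0 < k → C (u ^ k) (v ^ k) = C u v ^ k) :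
    ∀ u v, u ∈ Set.Ioo (0 : ℝ) 1 → v ∈ Set.Ioo (0 : ℝ) 1 →
      deriv (fun x => C x v) u * u * Real.log u +
        deriv (fun y => C u y) v * v * Real.log v =
        C u v * Real.log (C u v) := by
  intro u v hu hv
  have hleft := hasDerivAt_comp_const_rpow_at_one (hdiff1 u v hu hv).hasDerivAt hu.1
  have hright := hasDerivAt_rpow_comp_inv_self_at_one
    (hasDerivAt_comp_const_rpow_at_one (hdiff2 u v hu hv).hasDerivAt hv.1)
    (by simpa using (hmap u v hu hv).1)
  have hshift : (fun k : ℝ => C (u ^ k) v) =ᶠ[𝓝 1] fun k => C u (v ^ k⁻¹) ^ k := by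
    filter_upwards [Ioi_mem_nhds zero_lt_one] with k hk
    exact selfChaining_shift_exponent C hsc hu hv hk
  have hderiv := hleft.unique (hright.congr_of_eventuallyEq hshift)
  simp only [rpow_one] at hderiv
  linarith
end

section
/- If φ : (0,1] → [0,∞) is a strict Archimedean generator (continuous, strictly decreasing, φ(1) = 0, lim_{u→0+} φ(u) = ∞) such that the associated copula C(u,v) = φ⁻¹(φ(u) + φ(v)) is self-chaining, then the function ψ = φ⁻¹ (the Laplace-transform candidate) satisfies ψ(z)^(1/N) = ψ(2·φ(φ⁻¹(z/2)^(1/N))) for all z ≥ 0 and all positive integers N; in particular ψ is an N-th power of another completely specified function for every N. -/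
/-! Self-chaining on the diagonal `u = v = φ⁻¹(z/2)` gives `C(u, u) = φ⁻¹(z)`, so taking
`k = 1/N` exhibits `φ⁻¹(z)^(1/N)` as a value of the same shape `φ⁻¹(2 φ(w))`. -/

theorem rpow_eq_of_selfChaining (φ ψ : ℝ → ℝ)
    (hψmap : ∀ z : ℝ, 0 ≤ z → ψ z ∈ Set.Ioc (0 : ℝ) 1)
    (hinv2 : ∀ z : ℝ, 0 ≤ z → φ (ψ z) = z)
    (hsc : ∀ u v : ℝ, u ∈ Set.Ioc (0 : ℝ) 1 → v ∈ Set.Ioc (0 : ℝ) 1 →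
      ∀ k : ℝ, 0 < k → ψ (φ (u ^ k) + φ (v ^ k)) = ψ (φ u + φ v) ^ k)
    {z : ℝ} (hz : 0 ≤ z) {k : ℝ} (hk : 0 < k) :
    ψ z ^ k = ψ (2 * φ (ψ (z / 2) ^ k)) := by
  have hz2 : 0 ≤ z / 2 := by linarith
  have hdiag := hsc _ _ (hψmap _ hz2) (hψmap _ hz2) k hk
  rw [hinv2 _ hz2, add_halves, ← two_mul] at hdiag
  exact hdiag.symm

theorem archimedean_selfChaining_infDiv_identity_general
    (φ ψ : ℝ → ℝ)
    (hψmap : ∀ z : ℝ, 0 ≤ z → ψ z ∈ Set.Ioc (0 : ℝ) 1)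
    (hinv2 : ∀ z : ℝ, 0 ≤ z → φ (ψ z) = z)
    (hsc : ∀ u v : ℝ, u ∈ Set.Ioc (0 : ℝ) 1 → v ∈ Set.Ioc (0 : ℝ) 1 →
      ∀ k : ℝ, 0 < k → ψ (φ (u ^ k) + φ (v ^ k)) = ψ (φ u + φ v) ^ k) :
    (∀ z : ℝ, 0 ≤ z → ∀ N : ℕ, 0 < N →
      ψ z ^ ((1 : ℝ) / N) = ψ (2 * φ (ψ (z / 2) ^ ((1 : ℝ) / N)))) ∧
    (∀ N : ℕ, 0 < N → ∃ ψN : ℝ → ℝ, ∀ z : ℝ, 0 ≤ z → ψ z = ψN z ^ (N : ℕ)) := by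
  have hroot : ∀ z : ℝ, 0 ≤ z → ∀ N : ℕ, 0 < N →
      ψ z ^ ((1 : ℝ) / N) = ψ (2 * φ (ψ (z / 2) ^ ((1 : ℝ) / N))) :=
    fun z hz N hN => rpow_eq_of_selfChaining φ ψ hψmap hinv2 hsc hz (by positivity)
  refine ⟨hroot, fun N hN => ⟨fun z => ψ (2 * φ (ψ (z / 2) ^ ((1 : ℝ) / N))), fun z hz => ?_⟩⟩
  change ψ z = ψ (2 * φ (ψ (z / 2) ^ ((1 : ℝ) / N))) ^ N
  rw [← hroot z hz N hN, one_div, Real.rpow_inv_natCast_pow (hψmap z hz).1.le hN.ne']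

/-- If the Archimedean copula of a strict generator `φ` is self-chaining, then
the inverse generator `ψ = φ⁻¹` satisfies
`ψ(z)^(1/N) = ψ(2·φ(φ⁻¹(z/2)^(1/N)))` for all `z ≥ 0` and positive integers
`N`; in particular `ψ` is an `N`-th power of another function for every `N`. -/
theorem archimedean_selfChaining_infDiv_identity
    (φ ψ : ℝ → ℝ)
    (hφcont : ContinuousOn φ (Set.Ioc 0 1))
    (hφanti : StrictAntiOn φ (Set.Ioc 0 1))
    (hφ1 : φ 1 = 0)
    (hφmap : ∀ u ∈ Set.Ioc (0 : ℝ) 1, 0 ≤ φ u)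
    (hφtop : Filter.Tendsto φ (nhdsWithin 0 (Set.Ioc 0 1)) Filter.atTop)
    (hψmap : ∀ z : ℝ, 0 ≤ z → ψ z ∈ Set.Ioc (0 : ℝ) 1)
    (hinv1 : ∀ u ∈ Set.Ioc (0 : ℝ) 1, ψ (φ u) = u)
    (hinv2 : ∀ z : ℝ, 0 ≤ z → φ (ψ z) = z)
    (hsc : ∀ u v : ℝ, u ∈ Set.Ioc (0 : ℝ) 1 → v ∈ Set.Ioc (0 : ℝ) 1 →
      ∀ k : ℝ, 0 < k → ψ (φ (u ^ k) + φ (v ^ k)) = ψ (φ u + φ v) ^ k) :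
    (∀ z : ℝ, 0 ≤ z → ∀ N : ℕ, 0 < N →
      ψ z ^ ((1 : ℝ) / N) = ψ (2 * φ (ψ (z / 2) ^ ((1 : ℝ) / N)))) ∧
    (∀ N : ℕ, 0 < N → ∃ ψN : ℝ → ℝ, ∀ z : ℝ, 0 ≤ z → ψ z = ψN z ^ (N : ℕ)) :=
  archimedean_selfChaining_infDiv_identity_general φ ψ hψmap hinv2 hsc
end

section
/- Let f : [0,∞) → (0,1] be continuous, strictly decreasing with f(0) = 1, and suppose f(x)^a = f(x/N) with a = N^(-α) for all x ≥ 0 and all positive rationals N = M/K (M, K positive integers), for some fixed α ∈ (0,1). Then there exists c > 0 with f(x) = exp(-c·x^α) for all x ≥ 0. -/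
/-- A continuous, strictly decreasing `f : [0,∞) → (0,1]` with `f(0) = 1`
satisfying the semi-stable scaling relation `f(x)^(N^(-α)) = f(x/N)` for all
positive rational spans `N = M/K` must be the Laplace transform of a strictly
`α`-stable positive distribution: `f(x) = exp(-c·x^α)` for some `c > 0`. -/
theorem semistable_rational_spans_implies_stable
    (f : ℝ → ℝ) (α : ℝ) (hα : α ∈ Set.Ioo (0 : ℝ) 1)
    (hcont : ContinuousOn f (Set.Ici 0))
    (hanti : StrictAntiOn f (Set.Ici 0))
    (hf0 : f 0 = 1)
    (hmap : ∀ x : ℝ, 0 ≤ x → f x ∈ Set.Ioc (0 : ℝ) 1)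
    (heq : ∀ M K : ℕ, 0 < M → 0 < K → ∀ x : ℝ, 0 ≤ x →
      f x ^ (((M : ℝ) / K) ^ (-α)) = f (x / ((M : ℝ) / K))) :
    ∃ c : ℝ, 0 < c ∧ ∀ x : ℝ, 0 ≤ x → f x = Real.exp (-c * x ^ α) := by
  obtain ⟨hα0, hα1⟩ := hα
  have hf1pos : 0 < f 1 := (hmap 1 (by norm_num)).1
  have hf1lt : f 1 < 1 := by
    have := hanti (Set.self_mem_Ici) (by norm_num : (1:ℝ) ∈ Set.Ici 0) (by norm_num)
    rwa [hf0] at this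
  set c : ℝ := -Real.log (f 1) with hc
  have hcpos : 0 < c := by
    have : Real.log (f 1) < 0 := Real.log_neg hf1pos hf1lt
    linarith
  refine ⟨c, hcpos, ?_⟩
  -- key: value at positive rationals
  have key : ∀ q : ℚ, 0 < q → f q = Real.exp (-c * (q : ℝ) ^ α) := by
    intro q hq
    have hqR : (0:ℝ) < (q:ℝ) := by exact_mod_cast hq
    have hnum : 0 < q.num := Rat.num_pos.mpr hq
    set M : ℕ := q.num.toNat with hM
    set K : ℕ := q.den with hK
    have hMpos : 0 < M := by
      rw [hM]; omega
    have hKpos : 0 < K := q.den_pos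
    have hcast : ((M : ℝ) / K) = (q : ℝ) := by
      rw [Rat.cast_def]
      congr 1
      · rw [hM]
        exact_mod_cast congrArg Int.cast (Int.toNat_of_nonneg hnum.le)
    have h := heq M K hMpos hKpos (q : ℝ) hqR.le
    rw [hcast, div_self hqR.ne'] at h
    have hfq : 0 < f q := (hmap _ hqR.le).1
    have hlog := congrArg Real.log h
    rw [Real.log_rpow hfq] at hlog
    have h2 : (q:ℝ) ^ α * ((q:ℝ) ^ (-α) * Real.log (f q)) = (q:ℝ) ^ α * Real.log (f 1) := by
      rw [hlog]
    rw [← mul_assoc, ← Real.rpow_add hqR, add_neg_cancel, Real.rpow_zero, one_mul] at h2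
    rw [← Real.exp_log hfq, h2, hc]
    ring_nf
  intro x hx
  rcases eq_or_lt_of_le hx with rfl | hxpos
  · rw [hf0, Real.zero_rpow hα0.ne', mul_zero, Real.exp_zero]
  -- choose rationals q_n ∈ (x, x + 1/(n+1)) tending to x
  have hseq : ∀ n : ℕ, ∃ q : ℚ, x < (q:ℝ) ∧ (q:ℝ) < x + 1/(n+1) := by
    intro n
    have h1n : (0:ℝ) < 1/(n+1) := by positivity
    exact exists_rat_btwn (by linarith)
  choose u hu1 hu2 using hseq
  have hupos : ∀ n, 0 < u n := by
    intro n
    have := (hxpos.trans (hu1 n))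
    exact_mod_cast this
  have htend : Filter.Tendsto (fun n => ((u n : ℝ))) Filter.atTop (nhds x) := by
    have h1 : Filter.Tendsto (fun n : ℕ => x + 1/(n+1)) Filter.atTop (nhds x) := by
      have := tendsto_one_div_add_atTop_nhds_zero_nat (𝕜 := ℝ)
      simpa using (tendsto_const_nhds.add this)
    exact tendsto_of_tendsto_of_tendsto_of_le_of_le tendsto_const_nhds h1
      (fun n => (hu1 n).le) (fun n => (hu2 n).le)
  have hf_tend : Filter.Tendsto (fun n => f (u n)) Filter.atTop (nhds (f x)) := by
    refine ((hcont x hx).tendsto).comp ?_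
    refine tendsto_nhdsWithin_of_tendsto_nhds_of_eventually_within _ htend ?_
    filter_upwards with n
    exact (hxpos.trans (hu1 n)).le
  have hg_tend : Filter.Tendsto (fun n => Real.exp (-c * ((u n : ℝ)) ^ α)) Filter.atTop
      (nhds (Real.exp (-c * x ^ α))) := by
    have hrpow : ContinuousAt (fun y : ℝ => y ^ α) x :=
      Real.continuousAt_rpow_const x α (Or.inl hxpos.ne')
    exact (Real.continuous_exp.continuousAt.comp
      ((continuousAt_const.mul hrpow))).tendsto.comp htend
  have heqlim : (fun n => f (u n)) = fun n => Real.exp (-c * ((u n : ℝ)) ^ α) := by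
    funext n
    exact key (u n) (hupos n)
  rw [heqlim] at hf_tend
  exact tendsto_nhds_unique hf_tend hg_tend
end
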